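/- Let f : ℂ → ℂ be continuously differentiable (as a function of two real variables) with compact support. Define the d-bar operator by (∂̄f)(w) = (1/2)( D f(w)[1] + i · D f(w)[i] ), where D f(w)[v] is the real Fréchet derivative of f at w in direction v ∈ ℂ. Then for every z ∈ ℂ, f(z) = (1/π) ∫_ℂ (∂̄f)(w) / (z − w) dA(w), where dA is two-dimensional Lebesgue measure on ℂ. -/

import Mathlib

/-!
Translate `z` to the origin and integrate in polar coordinates `w = r e^{iθ}`. The Jacobian `r`
cancels the singularity of `1/w`, and for an ℝ-linear `L` one has
`L v + i L (i v) = v̄ (L 1 + i L i)`, so with `e = e^{iθ}` the integrand becomes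
`(D_e f + i D_{ie} f) / 2` at `z - r e`. Along each ray, `D_e f` is minus the `r`-derivative of
`f (z - r e)`, which by compact support integrates to `f z`; along each circle, `D_{ie} f` is a
multiple of the `θ`-derivative, which integrates to `0` over a full period. Hence the integral
is `2π · f z / 2 = π f z`.
-/

open MeasureTheory Real

/-- The d-bar operator `∂̄f = (1/2)(∂ₓf + i ∂_y f)`, expressed via the real Fréchet
derivative: `(∂̄f)(w) = (1/2)(Df(w)[1] + i·Df(w)[i])`. -/
noncomputable def dbar (f : ℂ → ℂ) (w : ℂ) : ℂ :=
  (1 / 2) * (fderiv ℝ f w 1 + Complex.I * fderiv ℝ f w Complex.I)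

open Set Filter
open Complex (I)
open ComplexConjugate

theorem HasCompactSupport.exists_forall_le_norm_sub_eq_zero {E F : Type*}
    [SeminormedAddCommGroup E] [Zero F] {f : E → F} (hf : HasCompactSupport f) (x : E) :
    ∃ R, ∀ v, R ≤ ‖v‖ → f (x - v) = 0 := by
  obtain ⟨R, hR⟩ := hf.isBounded.subset_ball x
  refine ⟨R, fun v hv => image_eq_zero_of_notMem_tsupport fun hmem => ?_⟩
  have := hR hmem
  rw [Metric.mem_ball, dist_eq_norm, sub_sub_cancel_left, norm_neg] at this
  linarith

theorem HasCompactSupport.comp_sub_smul {E F : Type*} [NormedAddCommGroup E] [NormedSpace ℝ E]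
    [Zero F] {f : E → F} (hf : HasCompactSupport f) (x : E) {v : E} (hv : v ≠ 0) :
    HasCompactSupport fun r : ℝ => f (x - r • v) :=
  hf.comp_isClosedEmbedding ((Homeomorph.subLeft x).isClosedEmbedding.comp
    (isClosedEmbedding_smul_left hv))

section FundamentalTheorem

variable {E F : Type*} [NormedAddCommGroup E] [NormedSpace ℝ E]
  [NormedAddCommGroup F] [NormedSpace ℝ F] {f : E → F}

theorem integral_Ioi_fderiv_sub_smul [CompleteSpace F] (hf : ContDiff ℝ 1 f)
    (hsupp : HasCompactSupport f) (x : E) {v : E} (hv : v ≠ 0) :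
    ∫ r in Ioi (0 : ℝ), fderiv ℝ f (x - r • v) v = f x := by
  have hderiv : ∀ r : ℝ, deriv (fun r : ℝ => f (x - r • v)) r = -fderiv ℝ f (x - r • v) v :=
    fun r => by
      have hline : HasDerivAt (fun r : ℝ => x - r • v) (-v) r := by
        simpa using ((hasDerivAt_id r).smul_const v).const_sub x
      exact ((hf.differentiable one_ne_zero _).hasFDerivAt.comp_hasDerivAt r hline).deriv.trans
        (map_neg _ v)
  have hC1 : ContDiff ℝ 1 fun r : ℝ => f (x - r • v) :=
    hf.comp (contDiff_const.sub (contDiff_id.smul contDiff_const))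
  have := (hsupp.comp_sub_smul x hv).integral_Ioi_deriv_eq hC1 0
  simpa only [hderiv, integral_neg, zero_smul, sub_zero, neg_inj] using this

theorem intervalIntegral_fderiv_comp_eq_zero [CompleteSpace F] (hf : ContDiff ℝ 1 f)
    {γ γ' : ℝ → E} (hγ : ∀ t, HasDerivAt γ (γ' t) t) (hγ' : Continuous γ') {a b : ℝ}
    (hab : γ a = γ b) : ∫ t in a..b, fderiv ℝ f (γ t) (γ' t) = 0 := by
  have hcont : Continuous fun t => fderiv ℝ f (γ t) (γ' t) :=
    ((hf.continuous_fderiv one_ne_zero).comp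
      (continuous_iff_continuousAt.2 fun t => (hγ t).continuousAt)).clm_apply hγ'
  rw [intervalIntegral.integral_eq_sub_of_hasDerivAt
    (fun t _ => (hf.differentiable one_ne_zero _).hasFDerivAt.comp_hasDerivAt t (hγ t))
    (hcont.intervalIntegrable a b), Function.comp_apply, Function.comp_apply, hab, sub_self]

end FundamentalTheorem

theorem Continuous.integrableOn_Ioi_prod_Ioo {F : Type*} [NormedAddCommGroup F]
    {g : ℝ × ℝ → F} (hg : Continuous g) {R : ℝ} (hR : ∀ p : ℝ × ℝ, R ≤ p.1 → g p = 0)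
    (a b c : ℝ) : IntegrableOn g (Ioi a ×ˢ Ioo b c) := by
  refine (hg.continuousOn.integrableOn_compact (isCompact_Icc (a := a) (b := R) |>.prod
    (isCompact_Icc (a := b) (b := c)))).of_forall_sdiff_eq_zero
    (measurableSet_Ioi.prod measurableSet_Ioo) fun p ⟨⟨ha, hbc⟩, hnot⟩ => hR p ?_
  by_contra! h
  exact hnot ⟨⟨le_of_lt ha, h.le⟩, Ioo_subset_Icc_self hbc⟩

theorem ContinuousLinearMap.apply_eq_re_smul_add_im_smul {F : Type*} [NormedAddCommGroup F]
    [NormedSpace ℝ F] (L : ℂ →L[ℝ] F) (u : ℂ) : L u = u.re • L 1 + u.im • L I := by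
  conv_lhs => rw [show u = u.re • (1 : ℂ) + u.im • I by simp]
  rw [map_add, map_smul, map_smul]

theorem two_mul_conj_mul_dbar (f : ℂ → ℂ) (w v : ℂ) :
    2 * conj v * dbar f w = fderiv ℝ f w v + I * fderiv ℝ f w (I * v) := by
  rw [dbar, (fderiv ℝ f w).apply_eq_re_smul_add_im_smul v,
    (fderiv ℝ f w).apply_eq_re_smul_add_im_smul (I * v)]
  conv_lhs => rw [← Complex.re_add_im v]
  simp only [Complex.real_smul, Complex.mul_re, Complex.mul_im, Complex.I_re, Complex.I_im,
    map_add, map_mul, Complex.conj_ofReal, Complex.conj_I]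
  push_cast
  linear_combination -(v.im * fderiv ℝ f w I) * Complex.I_sq

theorem Complex.polarCoord_symm_eq_smul_exp (p : ℝ × ℝ) :
    Complex.polarCoord.symm p = p.1 • Complex.exp (p.2 * I) := by
  rw [Complex.polarCoord_symm_apply, Complex.real_smul, Complex.exp_mul_I,
    ← Complex.ofReal_cos, ← Complex.ofReal_sin]

theorem hasDerivAt_exp_ofReal_mul_I (θ : ℝ) :
    HasDerivAt (fun θ : ℝ => Complex.exp (θ * I)) (I * Complex.exp (θ * I)) θ := by
  simpa [mul_comm] using ((Complex.ofRealCLM.hasDerivAt (x := θ)).mul_const I).cexp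

section Polar

variable {F : Type*} [NormedAddCommGroup F] [NormedSpace ℝ F] {f : ℂ → F}

theorem integrableOn_polarCoord_target_fderiv (hf : ContDiff ℝ 1 f)
    (hsupp : HasCompactSupport f) (z : ℂ) {u : ℝ → ℂ} (hu : Continuous u) :
    IntegrableOn (fun p : ℝ × ℝ => fderiv ℝ f (z - p.1 • Complex.exp (p.2 * I)) (u p.2))
      polarCoord.target := by
  obtain ⟨R, hR⟩ := (hsupp.fderiv ℝ).exists_forall_le_norm_sub_eq_zero z
  refine Continuous.integrableOn_Ioi_prod_Ioo (R := R) ?_ (fun p hp => ?_) _ _ _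
  · exact ((hf.continuous_fderiv one_ne_zero).comp (continuous_const.sub
      (continuous_fst.smul (by fun_prop)))).clm_apply (hu.comp continuous_snd)
  · rw [hR _ (hp.trans ?_), zero_apply]
    rw [norm_smul, Complex.norm_exp_ofReal_mul_I, mul_one, Real.norm_eq_abs]
    exact le_abs_self _

theorem setIntegral_polarCoord_target_fderiv_radial [CompleteSpace F] (hf : ContDiff ℝ 1 f)
    (hsupp : HasCompactSupport f) (z : ℂ) :
    ∫ p in polarCoord.target,
      fderiv ℝ f (z - p.1 • Complex.exp (p.2 * I)) (Complex.exp (p.2 * I)) = (2 * π) • f z := by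
  have hint := integrableOn_polarCoord_target_fderiv hf hsupp z
    (u := fun θ => Complex.exp (θ * I)) (by fun_prop)
  rw [polarCoord_target, IntegrableOn, Measure.volume_eq_prod, ← Measure.prod_restrict] at hint
  rw [polarCoord_target, Measure.volume_eq_prod, ← Measure.prod_restrict,
    integral_prod_symm _ hint]
  simp only [integral_Ioi_fderiv_sub_smul hf hsupp z (Complex.exp_ne_zero _), setIntegral_const,
    Real.volume_real_Ioo_of_le (by linarith [pi_pos] : -π ≤ π)]
  rw [sub_neg_eq_add, ← two_mul]

theorem setIntegral_polarCoord_target_fderiv_angular [CompleteSpace F] (hf : ContDiff ℝ 1 f)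
    (hsupp : HasCompactSupport f) (z : ℂ) :
    ∫ p in polarCoord.target,
      fderiv ℝ f (z - p.1 • Complex.exp (p.2 * I)) (I * Complex.exp (p.2 * I)) = 0 := by
  have hint := integrableOn_polarCoord_target_fderiv hf hsupp z
    (u := fun θ => I * Complex.exp (θ * I)) (by fun_prop)
  rw [polarCoord_target, Measure.volume_eq_prod] at hint ⊢
  rw [setIntegral_prod _ hint]
  refine (setIntegral_congr_fun measurableSet_Ioi fun r hr => ?_).trans (integral_zero _ _)
  have hloop := intervalIntegral_fderiv_comp_eq_zero hf
    (γ := fun θ : ℝ => z - r • Complex.exp (θ * I))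
    (γ' := fun θ => -(r • (I * Complex.exp (θ * I))))
    (fun θ => ((hasDerivAt_exp_ofReal_mul_I θ).const_smul r).const_sub z) (by fun_prop)
    (a := -π) (b := π) (by simp [Complex.exp_pi_mul_I, ← Complex.exp_neg_pi_mul_I])
  rw [intervalIntegral.integral_of_le (by linarith [pi_pos]), integral_Ioc_eq_integral_Ioo]
    at hloop
  simpa only [map_neg, map_smul, integral_neg, integral_smul, neg_eq_zero, smul_eq_zero,
    (mem_Ioi.1 hr).ne', false_or] using hloop

end Polar

theorem smul_dbar_comp_sub_div_polarCoord_symm (f : ℂ → ℂ) (z : ℂ) {p : ℝ × ℝ}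
    (hp : p.1 ≠ 0) :
    p.1 • (dbar f (z - Complex.polarCoord.symm p) / Complex.polarCoord.symm p) =
      (1 / 2 : ℂ) * (fderiv ℝ f (z - p.1 • Complex.exp (p.2 * I)) (Complex.exp (p.2 * I)) +
        I * fderiv ℝ f (z - p.1 • Complex.exp (p.2 * I)) (I * Complex.exp (p.2 * I))) := by
  rw [Complex.polarCoord_symm_eq_smul_exp, ← two_mul_conj_mul_dbar,
    ← Complex.inv_eq_conj (Complex.norm_exp_ofReal_mul_I _), Complex.real_smul,
    Complex.real_smul]
  field_simp [Complex.ofReal_ne_zero.2 hp, Complex.exp_ne_zero]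

theorem integral_dbar_comp_sub_div (f : ℂ → ℂ) (hf : ContDiff ℝ 1 f)
    (hsupp : HasCompactSupport f) (z : ℂ) :
    ∫ w : ℂ, dbar f (z - w) / w = π * f z := by
  have hradial := integrableOn_polarCoord_target_fderiv hf hsupp z
    (u := fun θ => Complex.exp (θ * I)) (by fun_prop)
  have hangular := integrableOn_polarCoord_target_fderiv hf hsupp z
    (u := fun θ => I * Complex.exp (θ * I)) (by fun_prop)
  rw [← Complex.integral_comp_polarCoord_symm,
    setIntegral_congr_fun polarCoord.open_target.measurableSet
      fun p hp => smul_dbar_comp_sub_div_polarCoord_symm f z (mem_Ioi.1 hp.1).ne',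
    integral_const_mul, integral_add hradial (hangular.const_mul I), integral_const_mul,
    setIntegral_polarCoord_target_fderiv_radial hf hsupp,
    setIntegral_polarCoord_target_fderiv_angular hf hsupp, Complex.real_smul]
  push_cast
  ring

/-- Area Cauchy–Pompeiu formula: for `f ∈ C¹_c(ℂ)`,
`f(z) = (1/π) ∫_ℂ (∂̄f)(w)/(z - w) dA(w)`, i.e. `1/(πk)` is the fundamental solution
of the d-bar operator. -/
theorem cauchy_pompeiu_area (f : ℂ → ℂ) (hf : ContDiff ℝ 1 f)
    (hsupp : HasCompactSupport f) (z : ℂ) :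
    f z = ((π : ℂ))⁻¹ * ∫ w : ℂ, dbar f w / (z - w) := by
  have htranslate : ∫ w : ℂ, dbar f w / (z - w) = ∫ w : ℂ, dbar f (z - w) / w := by
    simpa only [sub_sub_cancel] using
      integral_sub_left_eq_self (fun w => dbar f (z - w) / w) volume z
  rw [htranslate, integral_dbar_comp_sub_div f hf hsupp, inv_mul_cancel_left₀
    (Complex.ofReal_ne_zero.2 pi_ne_zero)]
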